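/- arXiv:2101.09661 — 3 statements merged into one kernel-verified Lean document; each statement's English description precedes it below -/
import Mathlib

section
/- Let X be a real linear n-normed space. The b-natural embedding J sending (x, b₂, ..., bₙ) to the evaluation functional φ_{(x,F)} ∈ X**_F (where φ_{(x,F)}(T) = T(x,b₂,...,bₙ)) is linear in x and norm-preserving: ‖J(x, b₂, ..., bₙ)‖ = ‖x, b₂, ..., bₙ‖ for all x ∈ X. Moreover, if x ≠ y and {x - y, b₂, ..., bₙ} is linearly independent, then J(x, b₂, ..., bₙ) ≠ J(y, b₂, ..., bₙ). -/
open Function Filter Topology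

/-- An `n`-norm on a real vector space `X` (axioms N1-N4). -/
structure NNorm (n : ℕ) (X : Type*) [AddCommGroup X] [Module ℝ X] where
  toFun : (Fin n → X) → ℝ
  eq_zero_iff : ∀ v : Fin n → X, toFun v = 0 ↔ ¬ LinearIndependent ℝ v
  perm_invariant : ∀ (σ : Equiv.Perm (Fin n)) (v : Fin n → X), toFun (v ∘ σ) = toFun v
  smul_eq : ∀ (α : ℝ) (v : Fin n → X) (i : Fin n),
      toFun (Function.update v i (α • v i)) = |α| * toFun v
  add_le : ∀ (v : Fin n → X) (i : Fin n) (x y : X),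
      toFun (Function.update v i (x + y)) ≤
        toFun (Function.update v i x) + toFun (Function.update v i y)

variable {n : ℕ} {X : Type*} [AddCommGroup X] [Module ℝ X]

/-- The seminorm `x ↦ ‖x, b₂, …, bₙ‖` obtained by fixing the vectors `b` in all slots
but the first. -/
noncomputable def bsem (N : NNorm (n + 1) X) (b : Fin (n + 1) → X) (x : X) : ℝ :=
  N.toFun (Function.update b 0 x)

section Generic

variable {V : Type*} [AddCommGroup V] [Module ℝ V]

/-- A `b`-linear functional: additive and homogeneous in its first argument. -/
def IsBLinear (T : V → ℝ) : Prop :=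
  (∀ x y : V, T (x + y) = T x + T y) ∧ ∀ (k : ℝ) (x : V), T (k • x) = k * T x

/-- A bounded `b`-linear functional with respect to a seminorm `p`. -/
def IsBddBLinearP (p : V → ℝ) (T : V → ℝ) : Prop :=
  IsBLinear T ∧ ∃ M > 0, ∀ x : V, |T x| ≤ M * p x

/-- The norm of a bounded `b`-linear functional with respect to a seminorm `p`. -/
noncomputable def bnormP (p : V → ℝ) (T : V → ℝ) : ℝ :=
  sInf {M : ℝ | 0 < M ∧ ∀ x : V, |T x| ≤ M * p x}

end Generic

/-- A bounded `b`-linear functional on `X × ⟨b₂⟩ × ⋯ × ⟨bₙ⟩`. -/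
def IsBddBLinear (N : NNorm (n + 1) X) (b : Fin (n + 1) → X) (T : X → ℝ) : Prop :=
  IsBddBLinearP (bsem N b) T

/-- The norm of a bounded `b`-linear functional on `X × ⟨b₂⟩ × ⋯ × ⟨bₙ⟩`. -/
noncomputable def bnorm (N : NNorm (n + 1) X) (b : Fin (n + 1) → X) (T : X → ℝ) : ℝ :=
  bnormP (bsem N b) T

/-- Convergence of a sequence in a linear `n`-normed space. -/
def NConv (N : NNorm (n + 1) X) (u : ℕ → X) (x : X) : Prop :=
  ∀ v : Fin (n + 1) → X,
    Tendsto (fun k => N.toFun (Function.update v 0 (u k - x))) atTop (nhds 0)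

/-- A subspace is closed if it contains all limits of its convergent sequences. -/
def IsClosedSub (N : NNorm (n + 1) X) (W : Submodule ℝ X) : Prop :=
  ∀ u : ℕ → X, (∀ k, u k ∈ W) → ∀ x : X, NConv N u x → x ∈ W

/-- `b`-weak convergence of a sequence. -/
def BWeakConv (N : NNorm (n + 1) X) (b : Fin (n + 1) → X) (u : ℕ → X) (x : X) : Prop :=
  ∀ T : X → ℝ, IsBddBLinear N b T →
    Tendsto (fun k => T (u k)) atTop (nhds (T x))

/-! The evaluation map is isometric by Hahn–Banach: for a seminorm `p` and a vector `x`, the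
functional `c • x ↦ c * p x` on `span {x}` is dominated by `p`, and it extends to a linear
functional `g` with `|g| ≤ p` everywhere. Such a `g` has `b`-norm at most `1` and attains `p x`
at `x`, while `|T x| ≤ ‖T‖ p x` for every bounded `T`. Injectivity follows because linear
independence of `x - y, b₂, …, bₙ` makes `‖x - y, b₂, …, bₙ‖` nonzero. -/

section Generic

variable {V : Type*}

theorem bnormP_le {p T : V → ℝ} {M : ℝ} (hM : 0 < M) (hT : ∀ x, |T x| ≤ M * p x) :
    bnormP p T ≤ M :=
  csInf_le ⟨0, fun _ hM' => hM'.1.le⟩ ⟨hM, hT⟩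

variable [AddCommGroup V] [Module ℝ V]

theorem Seminorm.exists_dual_abs_le_apply_eq (p : Seminorm ℝ V) (x : V) :
    ∃ g : Module.Dual ℝ V, (∀ z, |g z| ≤ p z) ∧ g x = p x := by
  have hker : ∀ c : ℝ, c • x = 0 → c • p x = 0 := by
    intro c hc
    rcases smul_eq_zero.1 hc with rfl | rfl <;> simp
  set f := LinearPMap.mkSpanSingleton' (σ := RingHom.id ℝ) x (p x) hker
  have hfp : ∀ z : f.domain, f z ≤ p z := by
    rintro ⟨z, hz⟩
    obtain ⟨c, rfl⟩ := Submodule.mem_span_singleton.1 hz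
    rw [LinearPMap.mkSpanSingleton'_apply, RingHom.id_apply, smul_eq_mul, map_smul_eq_mul,
      Real.norm_eq_abs]
    exact mul_le_mul_of_nonneg_right (le_abs_self c) (apply_nonneg p x)
  obtain ⟨g, hgf, hgp⟩ := Module.Dual.exists_extension_of_le_seminorm_real f.domain f.toFun hfp
  have hx : x ∈ f.domain := Submodule.mem_span_singleton_self x
  exact ⟨g, hgp, (hgf ⟨x, hx⟩).trans (LinearPMap.mkSpanSingleton'_apply_self x (p x) hker hx)⟩

theorem IsBLinear.apply_smul_add_smul {T : V → ℝ} (hT : IsBLinear T) (α β : ℝ) (x y : V) :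
    T (α • x + β • y) = α * T x + β * T y := by
  rw [hT.1, hT.2, hT.2]

theorem isBddBLinearP_of_abs_le {p : V → ℝ} (g : Module.Dual ℝ V) (hg : ∀ z, |g z| ≤ p z) :
    IsBddBLinearP p g :=
  ⟨⟨map_add g, map_smul g⟩, 1, one_pos, by simpa using hg⟩

theorem IsBddBLinearP.abs_le_bnormP_mul {p : Seminorm ℝ V} {T : V → ℝ}
    (hT : IsBddBLinearP p T) (x : V) : |T x| ≤ bnormP p T * p x := by
  obtain ⟨M, hM⟩ := hT.2
  rcases (apply_nonneg p x).eq_or_lt with hx | hx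
  · simpa [← hx] using hM.2 x
  · rw [← div_le_iff₀ hx]
    exact le_csInf ⟨M, hM⟩ fun M' hM' => (div_le_iff₀ hx).2 (hM'.2 x)

theorem sSup_abs_apply_eq_seminorm (p : Seminorm ℝ V) (x : V) :
    sSup {r : ℝ | ∃ T : V → ℝ, IsBddBLinearP p T ∧ bnormP p T ≤ 1 ∧ r = |T x|} = p x := by
  refine IsGreatest.csSup_eq ⟨?_, ?_⟩
  · obtain ⟨g, hgp, hgx⟩ := p.exists_dual_abs_le_apply_eq x
    exact ⟨g, isBddBLinearP_of_abs_le g hgp, bnormP_le one_pos (by simpa using hgp),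
      by rw [hgx, abs_of_nonneg (apply_nonneg p x)]⟩
  · rintro r ⟨T, hT, hT1, rfl⟩
    calc |T x| ≤ bnormP p T * p x := hT.abs_le_bnormP_mul x
      _ ≤ 1 * p x := mul_le_mul_of_nonneg_right hT1 (apply_nonneg p x)
      _ = p x := one_mul _

theorem exists_isBddBLinearP_apply_ne (p : Seminorm ℝ V) {x y : V} (hxy : p (x - y) ≠ 0) :
    ∃ T : V → ℝ, IsBddBLinearP p T ∧ T x ≠ T y := by
  obtain ⟨g, hgp, hgxy⟩ := p.exists_dual_abs_le_apply_eq (x - y)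
  refine ⟨g, isBddBLinearP_of_abs_le g hgp, fun h => hxy ?_⟩
  rw [← hgxy, map_sub, h, sub_self]

end Generic

namespace NNorm

variable (N : NNorm (n + 1) X) (b : Fin (n + 1) → X)

noncomputable def bseminorm : Seminorm ℝ X :=
  Seminorm.of (bsem N b) (N.add_le b 0) fun a x => by
    simpa [bsem, Function.update_idem] using N.smul_eq a (Function.update b 0 x) 0

theorem bsem_ne_zero_of_linearIndependent {x : X}
    (hx : LinearIndependent ℝ (Function.update b 0 x)) : bsem N b x ≠ 0 :=
  fun h => (N.eq_zero_iff _).1 h hx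

end NNorm

theorem stmt7_general (N : NNorm (n + 1) X) (b : Fin (n + 1) → X) :
    (∀ (x y : X) (α β : ℝ) (T : X → ℝ), IsBddBLinear N b T →
      T (α • x + β • y) = α * T x + β * T y) ∧
    (∀ x : X,
      sSup {r : ℝ | ∃ T : X → ℝ, IsBddBLinear N b T ∧ bnorm N b T ≤ 1 ∧ r = |T x|} =
        bsem N b x) ∧
    (∀ x y : X, x ≠ y → LinearIndependent ℝ (Function.update b 0 (x - y)) →
      (fun T : {T : X → ℝ // IsBddBLinear N b T} => T.1 x) ≠
        (fun T : {T : X → ℝ // IsBddBLinear N b T} => T.1 y)) := by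
  refine ⟨fun x y α β T hT => hT.1.apply_smul_add_smul α β x y,
    fun x => sSup_abs_apply_eq_seminorm (N.bseminorm b) x, fun x y _ hli hJ => ?_⟩
  obtain ⟨T, hT, hne⟩ := exists_isBddBLinearP_apply_ne (N.bseminorm b)
    (N.bsem_ne_zero_of_linearIndependent b hli)
  exact hne (congrFun hJ ⟨T, hT⟩)

theorem stmt7 (N : NNorm (n + 1) X) (b : Fin (n + 1) → X)
    (hdim : ↑(n + 1) ≤ Module.rank ℝ X) :
    (∀ (x y : X) (α β : ℝ) (T : X → ℝ), IsBddBLinear N b T →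
      T (α • x + β • y) = α * T x + β * T y) ∧
    (∀ x : X,
      sSup {r : ℝ | ∃ T : X → ℝ, IsBddBLinear N b T ∧ bnorm N b T ≤ 1 ∧ r = |T x|} =
        bsem N b x) ∧
    (∀ x y : X, x ≠ y → LinearIndependent ℝ (Function.update b 0 (x - y)) →
      (fun T : {T : X → ℝ // IsBddBLinear N b T} => T.1 x) ≠
        (fun T : {T : X → ℝ // IsBddBLinear N b T} => T.1 y)) :=
  stmt7_general N b
end

section
/- Let {x_k} be a sequence in a linear n-normed space X such that sup_k |T(x_k, b₂, ..., bₙ)| < ∞ for every bounded b-linear functional T ∈ X*_F. Then sup_k ‖x_k, b₂, ..., bₙ‖ < ∞. -/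
open Function Filter Topology

variable {n : ℕ} {X : Type*} [AddCommGroup X] [Module ℝ X]

section WeakBoundedness

variable {𝕜 E ι : Type*} [RCLike 𝕜]

/-- By Hahn–Banach, `x ↦ (f ↦ f x)` is an isometry into the bidual, which is complete whether or not
`E` is, so the uniform boundedness principle applies there. -/
theorem exists_norm_le_of_forall_dual_bounded [SeminormedAddCommGroup E] [NormedSpace 𝕜 E]
    {u : ι → E} (h : ∀ f : StrongDual 𝕜 E, ∃ C, ∀ i, ‖f (u i)‖ ≤ C) : ∃ C, ∀ i, ‖u i‖ ≤ C := by
  obtain ⟨C, hC⟩ := banach_steinhaus (g := fun i ↦ NormedSpace.inclusionInDoubleDual 𝕜 E (u i)) h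
  exact ⟨C, fun i ↦ (NormedSpace.inclusionInDoubleDualLi 𝕜).norm_map (u i) ▸ hC i⟩

theorem Seminorm.exists_le_of_forall_bounded_linear [AddCommGroup E] [Module 𝕜 E]
    (p : Seminorm 𝕜 E) {u : ι → E}
    (h : ∀ f : E →ₗ[𝕜] 𝕜, (∃ M, ∀ x, ‖f x‖ ≤ M * p x) → ∃ C, ∀ i, ‖f (u i)‖ ≤ C) :
    ∃ C, ∀ i, p (u i) ≤ C := by
  let _ : SeminormedAddCommGroup E := p.toSeminormedAddCommGroup
  let _ : NormedSpace 𝕜 E := { norm_smul_le := fun a x ↦ (map_smul_eq_mul p a x).le }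
  exact exists_norm_le_of_forall_dual_bounded (u := u) fun f ↦ h f.toLinearMap ⟨‖f‖, f.le_opNorm⟩

end WeakBoundedness

section BSeminorm

variable (N : NNorm (n + 1) X) (b : Fin (n + 1) → X)

lemma bsem_smul (c : ℝ) (x : X) : bsem N b (c • x) = |c| * bsem N b x := by
  simpa [bsem] using N.smul_eq c (Function.update b 0 x) 0

noncomputable def bSeminorm : Seminorm ℝ X :=
  Seminorm.of (bsem N b) (N.add_le b 0) (bsem_smul N b)

lemma bsem_nonneg (x : X) : 0 ≤ bsem N b x := apply_nonneg (bSeminorm N b) x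

lemma isBddBLinear_of_abs_le (f : X →ₗ[ℝ] ℝ) {M : ℝ} (hM : ∀ x, |f x| ≤ M * bsem N b x) :
    IsBddBLinear N b f := by
  refine ⟨⟨map_add f, map_smul f⟩, |M| + 1, by positivity, fun x ↦ (hM x).trans ?_⟩
  exact mul_le_mul_of_nonneg_right (by linarith [le_abs_self M]) (bsem_nonneg N b x)

end BSeminorm

theorem stmt8_general (N : NNorm (n + 1) X) (b : Fin (n + 1) → X)
    (u : ℕ → X)
    (h : ∀ T : X → ℝ, IsBddBLinear N b T → ∃ C : ℝ, ∀ k, |T (u k)| ≤ C) :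
    ∃ C : ℝ, ∀ k, bsem N b (u k) ≤ C :=
  (bSeminorm N b).exists_le_of_forall_bounded_linear fun f ⟨_, hM⟩ ↦
    h f (isBddBLinear_of_abs_le N b f hM)

theorem stmt8 (N : NNorm (n + 1) X) (b : Fin (n + 1) → X)
    (hdim : ↑(n + 1) ≤ Module.rank ℝ X) (u : ℕ → X)
    (h : ∀ T : X → ℝ, IsBddBLinear N b T → ∃ C : ℝ, ∀ k, |T (u k)| ≤ C) :
    ∃ C : ℝ, ∀ k, bsem N b (u k) ≤ C :=
  stmt8_general N b u h
end

section
/- Let X be a real linear n-normed space, W a subspace, and x₀ ∈ X with d := inf_{x ∈ W} ‖x₀ - x, b₂, ..., bₙ‖ > 0. Define T₁ on the subspace W₀ = W + span{x₀} by T₁(y + α x₀, b₂, ..., bₙ) = α. Then T₁ is a well-defined bounded b-linear functional on W₀ × ⟨b₂⟩ × ... × ⟨bₙ⟩ with norm ‖T₁‖ = 1/d. -/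
open Function Filter Topology

variable {n : ℕ} {X : Type*} [AddCommGroup X] [Module ℝ X]

/-!
Every `z ∈ W ⊔ ℝ ∙ x₀` is uniquely `y + α • x₀` with `y ∈ W`, and for `α ≠ 0` we have
`‖z, b‖ = |α| · ‖x₀ - (-α⁻¹ • y), b‖ ≥ |α| d`; hence `|T₁ z| ≤ d⁻¹ ‖z, b‖`. Conversely
`T₁ (x₀ - w) = 1` for every `w ∈ W`, so any admissible bound `M` satisfies `1 ≤ M ‖x₀ - w, b‖`,
i.e. `M⁻¹ ≤ d`.
-/

noncomputable def NNorm.bseminorm_s16 (N : NNorm (n + 1) X) (b : Fin (n + 1) → X) : Seminorm ℝ X :=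
  Seminorm.of (bsem N b) (N.add_le b 0) fun α x => by
    simpa [bsem, Function.update_idem] using N.smul_eq α (Function.update b 0 x) 0

lemma LinearMap.isBLinear {V : Type*} [AddCommGroup V] [Module ℝ V] (f : V →ₗ[ℝ] ℝ) :
    IsBLinear f :=
  ⟨map_add f, map_smul f⟩

section SupSpanCoord

variable {E : Type*} [AddCommGroup E] [Module ℝ E] (W : Submodule ℝ E) (x₀ : E)

noncomputable def supSpanCoord (hx₀ : x₀ ∉ W) : ↥(W ⊔ Submodule.span ℝ {x₀}) →ₗ[ℝ] ℝ :=
  ((⟨W, 0⟩ : E →ₗ.[ℝ] ℝ).supSpanSingleton x₀ 1 hx₀).toFun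

lemma supSpanCoord_add_smul (hx₀ : x₀ ∉ W) {y : E} (hy : y ∈ W) (α : ℝ)
    (h : y + α • x₀ ∈ W ⊔ Submodule.span ℝ {x₀}) :
    supSpanCoord W x₀ hx₀ ⟨y + α • x₀, h⟩ = α := by
  exact (LinearPMap.supSpanSingleton_apply_mk (⟨W, 0⟩ : E →ₗ.[ℝ] ℝ) x₀ 1 hx₀ y hy α).trans
    (by simp)

end SupSpanCoord

namespace Seminorm

variable {E : Type*} [AddCommGroup E] [Module ℝ E] (p : Seminorm ℝ E) (W : Submodule ℝ E)
  (x₀ : E)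

noncomputable def infDist : ℝ := sInf ((fun w => p (x₀ - w)) '' W)

lemma infDist_le {w : E} (hw : w ∈ W) : p.infDist W x₀ ≤ p (x₀ - w) :=
  csInf_le ⟨0, by rintro _ ⟨w, -, rfl⟩; exact apply_nonneg p _⟩ ⟨w, hw, rfl⟩

lemma le_infDist {c : ℝ} (h : ∀ w ∈ W, c ≤ p (x₀ - w)) : c ≤ p.infDist W x₀ :=
  le_csInf ⟨_, 0, W.zero_mem, rfl⟩ (by rintro _ ⟨w, hw, rfl⟩; exact h w hw)

lemma notMem_of_infDist_pos (h : 0 < p.infDist W x₀) : x₀ ∉ W := fun hx =>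
  h.not_ge (by simpa using p.infDist_le W x₀ hx)

lemma infDist_mul_abs_le {y : E} (hy : y ∈ W) (α : ℝ) :
    p.infDist W x₀ * |α| ≤ p (y + α • x₀) := by
  rcases eq_or_ne α 0 with rfl | hα
  · simp
  have hz : y + α • x₀ = α • (x₀ - -(α⁻¹ • y)) := by
    rw [smul_sub, smul_neg, smul_smul, mul_inv_cancel₀ hα, one_smul, sub_neg_eq_add, add_comm]
  rw [hz, map_smul_eq_mul, Real.norm_eq_abs, mul_comm]
  exact mul_le_mul_of_nonneg_left (p.infDist_le W x₀ (W.neg_mem (W.smul_mem _ hy)))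
    (abs_nonneg α)

lemma infDist_mul_abs_supSpanCoord_le (hx₀ : x₀ ∉ W) (z : ↥(W ⊔ Submodule.span ℝ {x₀})) :
    p.infDist W x₀ * |supSpanCoord W x₀ hx₀ z| ≤ p z := by
  obtain ⟨z, hz⟩ := z
  obtain ⟨y, hy, _, hα, rfl⟩ := Submodule.mem_sup.mp hz
  obtain ⟨α, rfl⟩ := Submodule.mem_span_singleton.mp hα
  rw [supSpanCoord_add_smul W x₀ hx₀ hy]
  exact p.infDist_mul_abs_le W x₀ hy α

lemma isLeast_bound_supSpanCoord (hd : 0 < p.infDist W x₀) :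
    IsLeast {M : ℝ | 0 < M ∧ ∀ z : ↥(W ⊔ Submodule.span ℝ {x₀}),
        |supSpanCoord W x₀ (p.notMem_of_infDist_pos W x₀ hd) z| ≤ M * p z}
      (1 / p.infDist W x₀) := by
  refine ⟨⟨by positivity, fun z => ?_⟩, fun M ⟨hM, hbound⟩ => ?_⟩
  · rw [one_div_mul_eq_div, le_div_iff₀ hd, mul_comm]
    exact p.infDist_mul_abs_supSpanCoord_le W x₀ _ z
  · suffices 1 / M ≤ p.infDist W x₀ by
      rwa [div_le_iff₀ hM, mul_comm, ← div_le_iff₀ hd] at this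
    refine p.le_infDist W x₀ fun w hw => ?_
    have hmem : -w + (1 : ℝ) • x₀ ∈ W ⊔ Submodule.span ℝ {x₀} :=
      Submodule.add_mem_sup (W.neg_mem hw)
        (Submodule.smul_mem _ 1 (Submodule.mem_span_singleton_self x₀))
    have h1 := hbound ⟨_, hmem⟩
    rw [supSpanCoord_add_smul W x₀ _ (W.neg_mem hw), abs_one] at h1
    rw [div_le_iff₀ hM, mul_comm]
    simpa [neg_add_eq_sub] using h1

end Seminorm

theorem stmt16_general (N : NNorm (n + 1) X) (b : Fin (n + 1) → X)
    (W : Submodule ℝ X) (x₀ : X) (d : ℝ)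
    (hdinf : d = sInf ((fun w => bsem N b (x₀ - w)) '' (W : Set X))) (hd : 0 < d) :
    ∃ T₁ : ↥(W ⊔ Submodule.span ℝ {x₀}) → ℝ,
      (∀ (y : X) (hy : y ∈ W) (α : ℝ),
        T₁ ⟨y + α • x₀,
          Submodule.add_mem_sup hy
            (Submodule.smul_mem _ α (Submodule.mem_span_singleton_self x₀))⟩ = α) ∧
      IsBddBLinearP (fun z : ↥(W ⊔ Submodule.span ℝ {x₀}) => bsem N b (z : X)) T₁ ∧
      bnormP (fun z : ↥(W ⊔ Submodule.span ℝ {x₀}) => bsem N b (z : X)) T₁ = 1 / d := by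
  subst hdinf
  change 0 < (N.bseminorm_s16 b).infDist W x₀ at hd
  have hleast := (N.bseminorm_s16 b).isLeast_bound_supSpanCoord W x₀ hd
  refine ⟨supSpanCoord W x₀ _, fun y hy α => supSpanCoord_add_smul W x₀ _ hy α _,
    ⟨LinearMap.isBLinear _, _, hleast.1⟩, hleast.csInf_eq⟩

theorem stmt16 (N : NNorm (n + 1) X) (b : Fin (n + 1) → X)
    (hdim : ↑(n + 1) ≤ Module.rank ℝ X) (W : Submodule ℝ X) (x₀ : X) (d : ℝ)
    (hdinf : d = sInf ((fun w => bsem N b (x₀ - w)) '' (W : Set X))) (hd : 0 < d) :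
    ∃ T₁ : ↥(W ⊔ Submodule.span ℝ {x₀}) → ℝ,
      (∀ (y : X) (hy : y ∈ W) (α : ℝ),
        T₁ ⟨y + α • x₀,
          Submodule.add_mem_sup hy
            (Submodule.smul_mem _ α (Submodule.mem_span_singleton_self x₀))⟩ = α) ∧
      IsBddBLinearP (fun z : ↥(W ⊔ Submodule.span ℝ {x₀}) => bsem N b (z : X)) T₁ ∧
      bnormP (fun z : ↥(W ⊔ Submodule.span ℝ {x₀}) => bsem N b (z : X)) T₁ = 1 / d :=
  stmt16_general N b W x₀ d hdinf hd
end
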